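/- Assume moreover δ/K = q·Σ_{i=1}^3 (C_i/β_i)K^{β_i}e^{−β_i x*} − 1. Then the equation ∫_{−∞}^0 ∫_{−∞}^{t} (w_δ(t + log K) − δ)·e^{−(t−u)}·λθe^{θu} du dt = δq holds if and only if q·Σ_{i=1}^3 (C_i K^{β_i}/(β_i(θ+β_i)))·e^{−β_i x*} − ((λ + (θ+1)q)/(λθK))·δ = 1/(θ+1). (This is the equation characterising the threshold penalty δ₀ in the jump-diffusion case.) -/

import Mathlib

/-!
Convolving the exponential kernel with the jump density gives the inner integral in closed form,
`λθ/(θ+1) · (w(t + log K) - δ) e^{θt}`. On `t ≤ x* - log K` the function `w` is `K - eˣ` and on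
`(x* - log K, 0)` it is a sum of exponentials, so the outer integral is an explicit combination of
exponentials. The boundary terms at `x* - log K` cancel because of the partial-fraction identity
`q Σ Cᵢ/(βᵢ(θ+βᵢ)) = 1/θ`, which rests on `σ²β₁β₂/2 = θq`, the cubic evaluated at `z = 0`;
evaluating it at the pole `z = -θ` shows that no `θ + βᵢ` vanishes.
-/

open MeasureTheory Real Set

theorem integral_exp_mul {r : ℝ} (hr : r ≠ 0) (a b : ℝ) :
    ∫ x in a..b, exp (r * x) = (exp (r * b) - exp (r * a)) / r := by
  rw [intervalIntegral.integral_comp_mul_left (fun x => exp x) hr, integral_exp, smul_eq_mul,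
    inv_mul_eq_div]

theorem integral_Iio_eq_integral_Iic_add_intervalIntegral {f : ℝ → ℝ} {a b : ℝ} (hab : a < b)
    (h₁ : IntegrableOn f (Iic a)) (h₂ : IntegrableOn f (Ioo a b)) :
    ∫ x in Iio b, f x = (∫ x in Iic a, f x) + ∫ x in a..b, f x := by
  rw [intervalIntegral.integral_of_le hab.le, integral_Ioc_eq_integral_Ioo,
    ← setIntegral_union (Iic_disjoint_Ioi le_rfl |>.mono_right Ioo_subset_Ioi_self)
      measurableSet_Ioo h₁ h₂, Iic_union_Ioo_eq_Iio hab]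

theorem integral_Iio_exp_neg_sub_mul_exp {θ : ℝ} (hθ : 0 < θ + 1) (t : ℝ) :
    ∫ u in Iio t, exp (-(t - u)) * exp (θ * u) = exp (θ * t) / (θ + 1) := by
  have h : ∀ u, exp (-(t - u)) * exp (θ * u) = exp (-t) * exp ((θ + 1) * u) := fun u => by
    rw [← exp_add, ← exp_add]
    ring_nf
  simp_rw [h]
  rw [integral_const_mul, ← integral_Iic_eq_integral_Iio, integral_exp_mul_Iic hθ,
    ← mul_div_assoc, ← exp_add]
  ring_nf

theorem stopping_integrand_eq (θ K δ t : ℝ) :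
    (K - K * exp t - δ) * exp (θ * t) = (K - δ) * exp (θ * t) - K * exp ((θ + 1) * t) := by
  rw [add_mul, one_mul, exp_add]
  ring

theorem integrableOn_Iic_stopping {θ : ℝ} (hθ : 0 < θ) (K δ a : ℝ) :
    IntegrableOn (fun t => (K - K * exp t - δ) * exp (θ * t)) (Iic a) := by
  simp_rw [stopping_integrand_eq]
  exact ((integrableOn_exp_mul_Iic hθ a).const_mul _).sub
    ((integrableOn_exp_mul_Iic (by linarith) a).const_mul _)

theorem integral_Iic_stopping {θ : ℝ} (hθ : 0 < θ) (K δ a : ℝ) :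
    ∫ t in Iic a, (K - K * exp t - δ) * exp (θ * t)
      = (K - δ) * exp (θ * a) / θ - K * exp ((θ + 1) * a) / (θ + 1) := by
  have hθ₁ : 0 < θ + 1 := by linarith
  simp_rw [stopping_integrand_eq]
  rw [integral_sub ((integrableOn_exp_mul_Iic hθ a).const_mul _)
      ((integrableOn_exp_mul_Iic hθ₁ a).const_mul _), integral_const_mul, integral_const_mul,
    integral_exp_mul_Iic hθ, integral_exp_mul_Iic hθ₁, mul_div_assoc, mul_div_assoc]

theorem continuation_integrand_eq (θ β₁ β₂ β₃ c₁ c₂ c₃ K δ a t : ℝ) :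
    (c₁ * exp (β₁ * (t - a)) + c₂ * exp (β₂ * (t - a)) + c₃ * exp (β₃ * (t - a))
        - K * exp t - δ) * exp (θ * t)
      = c₁ * exp (-(β₁ * a)) * exp ((θ + β₁) * t) + c₂ * exp (-(β₂ * a)) * exp ((θ + β₂) * t)
        + c₃ * exp (-(β₃ * a)) * exp ((θ + β₃) * t) - K * exp ((θ + 1) * t)
        - δ * exp (θ * t) := by
  simp only [sub_mul, add_mul, mul_assoc, ← exp_add]
  ring_nf

theorem integral_continuation {θ β₁ β₂ β₃ : ℝ} (hθ : θ ≠ 0) (hθ₁ : θ + 1 ≠ 0)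
    (h₁ : θ + β₁ ≠ 0) (h₂ : θ + β₂ ≠ 0) (h₃ : θ + β₃ ≠ 0) (c₁ c₂ c₃ K δ a : ℝ) :
    ∫ t in a..0, (c₁ * exp (β₁ * (t - a)) + c₂ * exp (β₂ * (t - a)) + c₃ * exp (β₃ * (t - a))
        - K * exp t - δ) * exp (θ * t)
      = c₁ * (exp (-(β₁ * a)) - exp (θ * a)) / (θ + β₁)
        + c₂ * (exp (-(β₂ * a)) - exp (θ * a)) / (θ + β₂)
        + c₃ * (exp (-(β₃ * a)) - exp (θ * a)) / (θ + β₃)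
        - K * (1 - exp ((θ + 1) * a)) / (θ + 1) - δ * (1 - exp (θ * a)) / θ := by
  have hshift : ∀ β, exp (-(β * a)) * exp ((θ + β) * a) = exp (θ * a) := fun β => by
    rw [← exp_add]; ring_nf
  simp_rw [continuation_integrand_eq]
  simp (disch := exact Continuous.intervalIntegrable (by fun_prop) _ _) only
    [intervalIntegral.integral_add, intervalIntegral.integral_sub,
      intervalIntegral.integral_const_mul, integral_exp_mul h₁, integral_exp_mul h₂,
      integral_exp_mul h₃, integral_exp_mul hθ₁, integral_exp_mul hθ, mul_zero, exp_zero]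
  linear_combination -(c₁ / (θ + β₁)) * hshift β₁ - c₂ / (θ + β₂) * hshift β₂
    - c₃ / (θ + β₃) * hshift β₃

theorem integral_Iio_value_sub_mul_exp {θ K xstar δ q β₁ β₂ β₃ C₁ C₂ C₃ : ℝ} {w : ℝ → ℝ}
    (hθ : 0 < θ) (hK : 0 < K) (hxstar : xstar < log K)
    (h₁ : θ + β₁ ≠ 0) (h₂ : θ + β₂ ≠ 0) (h₃ : θ + β₃ ≠ 0)
    (hw1 : ∀ x : ℝ, x ≤ xstar → w x = K - exp x)
    (hw2 : ∀ x : ℝ, xstar < x → x < log K →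
      w x = K * q * (C₁ / β₁ * exp (β₁ * (x - xstar))
          + C₂ / β₂ * exp (β₂ * (x - xstar))
          + C₃ / β₃ * exp (β₃ * (x - xstar))) - exp x)
    (hC : q * (C₁ / (β₁ * (θ + β₁)) + C₂ / (β₂ * (θ + β₂)) + C₃ / (β₃ * (θ + β₃))) = 1 / θ) :
    ∫ t in Iio 0, (w (t + log K) - δ) * exp (θ * t)
      = K * q * (C₁ * K ^ β₁ / (β₁ * (θ + β₁)) * exp (-β₁ * xstar)
          + C₂ * K ^ β₂ / (β₂ * (θ + β₂)) * exp (-β₂ * xstar)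
          + C₃ * K ^ β₃ / (β₃ * (θ + β₃)) * exp (-β₃ * xstar))
        - K / (θ + 1) - δ / θ := by
  set a := xstar - log K with ha
  have ha₀ : a < 0 := by linarith
  have hexp : ∀ t, exp (t + log K) = K * exp t := fun t => by rw [exp_add, exp_log hK, mul_comm]
  have hstop : EqOn (fun t => (w (t + log K) - δ) * exp (θ * t))
      (fun t => (K - K * exp t - δ) * exp (θ * t)) (Iic a) := fun t ht => by
    simp only
    rw [hw1 _ (by linarith [mem_Iic.mp ht]), hexp]
  have hcont : EqOn (fun t => (w (t + log K) - δ) * exp (θ * t))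
      (fun t => (K * q * (C₁ / β₁) * exp (β₁ * (t - a)) + K * q * (C₂ / β₂) * exp (β₂ * (t - a))
        + K * q * (C₃ / β₃) * exp (β₃ * (t - a)) - K * exp t - δ) * exp (θ * t)) (Ioo a 0) :=
    fun t ht => by
      simp only
      rw [hw2 _ (by linarith [ht.1]) (by linarith [ht.2]), hexp,
        show t + log K - xstar = t - a by ring]
      ring
  have hX : ∀ β, exp (-(β * a)) = K ^ β * exp (-β * xstar) := fun β => by
    rw [rpow_def_of_pos hK, ← exp_add, ha]; ring_nf
  have hcont_int : IntegrableOn (fun t => (w (t + log K) - δ) * exp (θ * t)) (Ioo a 0) := by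
    refine IntegrableOn.congr_fun ?_ hcont.symm measurableSet_Ioo
    refine (Continuous.integrableOn_Icc ?_).mono_set Ioo_subset_Icc_self
    fun_prop
  rw [integral_Iio_eq_integral_Iic_add_intervalIntegral ha₀
      ((integrableOn_Iic_stopping hθ K δ a).congr_fun hstop.symm measurableSet_Iic)
      hcont_int,
    setIntegral_congr_fun measurableSet_Iic hstop,
    intervalIntegral.integral_congr_Ioo_of_le ha₀.le hcont,
    integral_Iic_stopping hθ, integral_continuation hθ.ne' (by linarith) h₁ h₂ h₃, hX, hX, hX]
  simp only [div_mul_eq_div_div] at hC ⊢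
  linear_combination (-(K * exp (θ * a))) * hC

theorem factored_cubic_eq {σ lam θ μ q β₁ β₂ : ℝ} {ψ : ℝ → ℝ}
    (hψ : ∀ z : ℝ, z ≠ -θ → ψ z = σ^2/2 * z^2 + μ * z + lam * (θ/(θ+z) - 1))
    (hcubic : ∀ z : ℝ, z ≠ -θ →
      σ^2/2 * (z - β₁) * (z - β₂) * (z - 1) = (θ + z) * (ψ z - q)) (z : ℝ) :
    σ^2/2 * (z - β₁) * (z - β₂) * (z - 1)
      = (θ + z) * (σ^2/2 * z^2 + μ * z - lam - q) + lam * θ := by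
  have hext := Continuous.ext_on (dense_compl_singleton (-θ))
    (f := fun z => σ^2/2 * (z - β₁) * (z - β₂) * (z - 1))
    (g := fun z => (θ + z) * (σ^2/2 * z^2 + μ * z - lam - q) + lam * θ) (by fun_prop) (by fun_prop)
    fun z (hz : z ≠ -θ) => by
      have hz' : θ + z ≠ 0 := fun h => hz (by linarith)
      simp only
      rw [hcubic z hz, hψ z hz]
      field_simp
      ring
  exact congrFun hext z

theorem q_mul_sum_C_div_eq_one_div {σ θ q β₁ β₂ β₃ C₁ C₂ C₃ : ℝ} (hσ : σ ≠ 0) (hθ : θ ≠ 0)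
    (hq : q ≠ 0) (h12 : β₁ ≠ β₂) (h13 : β₁ ≠ β₃) (h23 : β₂ ≠ β₃)
    (h₁ : θ + β₁ ≠ 0) (h₂ : θ + β₂ ≠ 0) (h₃ : θ + β₃ ≠ 0)
    (hβ : σ^2/2 * (β₁ * β₂ * β₃) = θ * q)
    (hC₁ : C₁ = 2 * (θ + β₁) / (σ^2 * ((β₂ - β₁) * (β₃ - β₁))))
    (hC₂ : C₂ = 2 * (θ + β₂) / (σ^2 * ((β₁ - β₂) * (β₃ - β₂))))
    (hC₃ : C₃ = 2 * (θ + β₃) / (σ^2 * ((β₁ - β₃) * (β₂ - β₃)))) :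
    q * (C₁ / (β₁ * (θ + β₁)) + C₂ / (β₂ * (θ + β₂)) + C₃ / (β₃ * (θ + β₃))) = 1 / θ := by
  have hprod : β₁ * β₂ * β₃ ≠ 0 := by
    intro h; rw [h, mul_zero] at hβ; exact mul_ne_zero hθ hq hβ.symm
  obtain ⟨⟨hβ₁, hβ₂⟩, hβ₃⟩ : (β₁ ≠ 0 ∧ β₂ ≠ 0) ∧ β₃ ≠ 0 := by
    simpa only [mul_ne_zero_iff] using hprod
  have := sub_ne_zero.mpr h12
  have := sub_ne_zero.mpr h13
  have := sub_ne_zero.mpr h23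
  -- with `q` eliminated this is the divided difference of `1/z`:
  -- `Σ 1/(βᵢ ∏_{j≠i}(βⱼ-βᵢ)) = 1/(β₁β₂β₃)`
  obtain rfl : q = σ^2 * (β₁ * β₂ * β₃) / (2 * θ) := by
    field_simp
    linear_combination -2 * hβ
  rw [hC₁, hC₂, hC₃]
  field_simp
  ring

theorem stmt_16_general
    (σ lam θ μ q : ℝ) (hσ : 0 < σ) (hlam : 0 < lam) (hθ : 0 < θ) (hq : 0 < q)
    (ψ : ℝ → ℝ)
    (hψ : ∀ z : ℝ, z ≠ -θ → ψ z = σ^2/2 * z^2 + μ * z + lam * (θ/(θ+z) - 1))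
    (β₁ β₂ β₃ : ℝ) (h12 : β₁ < β₂) (h23 : β₂ < β₃) (h3 : β₃ = 1)
    (hcubic : ∀ z : ℝ, z ≠ -θ →
      σ^2/2 * (z - β₁) * (z - β₂) * (z - 1) = (θ + z) * (ψ z - q))
    (C₁ C₂ C₃ : ℝ)
    (hC₁ : C₁ = 2 * (θ + β₁) / (σ^2 * ((β₂ - β₁) * (β₃ - β₁))))
    (hC₂ : C₂ = 2 * (θ + β₂) / (σ^2 * ((β₁ - β₂) * (β₃ - β₂))))
    (hC₃ : C₃ = 2 * (θ + β₃) / (σ^2 * ((β₁ - β₃) * (β₂ - β₃))))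
    (K : ℝ) (hK : 0 < K) (xstar : ℝ) (hxstar : xstar < Real.log K)
    (δ : ℝ)
    (w : ℝ → ℝ)
    (hw1 : ∀ x : ℝ, x ≤ xstar → w x = K - Real.exp x)
    (hw2 : ∀ x : ℝ, xstar < x → x < Real.log K →
      w x = K * q * (C₁ / β₁ * Real.exp (β₁ * (x - xstar))
          + C₂ / β₂ * Real.exp (β₂ * (x - xstar))
          + C₃ / β₃ * Real.exp (β₃ * (x - xstar))) - Real.exp x) :
    (∫ t in Set.Iio (0:ℝ), ∫ u in Set.Iio t,
        (w (t + Real.log K) - δ) * Real.exp (-(t - u)) * (lam * θ * Real.exp (θ * u)))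
      = δ * q
    ↔ q * (C₁ * K ^ β₁ / (β₁ * (θ + β₁)) * Real.exp (-β₁ * xstar)
          + C₂ * K ^ β₂ / (β₂ * (θ + β₂)) * Real.exp (-β₂ * xstar)
          + C₃ * K ^ β₃ / (β₃ * (θ + β₃)) * Real.exp (-β₃ * xstar))
        - ((lam + (θ + 1) * q) / (lam * θ * K)) * δ = 1 / (θ + 1) := by
  have hcub := factored_cubic_eq hψ hcubic
  have hβ : σ^2/2 * (β₁ * β₂ * β₃) = θ * q := by
    subst h3; linear_combination -hcub 0
  have hpole : σ^2/2 * ((θ + β₁) * (θ + β₂) * (θ + β₃)) = -(lam * θ) := by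
    subst h3; linear_combination -hcub (-θ)
  obtain ⟨⟨h₁, h₂⟩, h₃⟩ : (θ + β₁ ≠ 0 ∧ θ + β₂ ≠ 0) ∧ θ + β₃ ≠ 0 := by
    rw [← mul_ne_zero_iff, ← mul_ne_zero_iff]
    intro h
    rw [h, mul_zero] at hpole
    linarith [mul_pos hlam hθ]
  have hC := q_mul_sum_C_div_eq_one_div hσ.ne' hθ.ne' hq.ne' h12.ne (h12.trans h23).ne h23.ne
    h₁ h₂ h₃ hβ hC₁ hC₂ hC₃
  have hinner : ∀ t, ∫ u in Iio t, (w (t + log K) - δ) * exp (-(t - u)) * (lam * θ * exp (θ * u))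
      = lam * θ / (θ + 1) * ((w (t + log K) - δ) * exp (θ * t)) := fun t => by
    simp_rw [mul_mul_mul_comm, integral_const_mul,
      integral_Iio_exp_neg_sub_mul_exp (by linarith : 0 < θ + 1)]
    ring
  simp_rw [hinner]
  rw [integral_const_mul, integral_Iio_value_sub_mul_exp hθ hK hxstar h₁ h₂ h₃ hw1 hw2 hC]
  constructor <;> intro h <;> field_simp at h ⊢ <;> linear_combination h

/-- Assuming the continuous-fit equation for `x*`, the integral equation at
`y = log K` holds iff the equation characterising the threshold penalty `δ₀`
in the jump-diffusion case holds. -/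
theorem stmt_16
    (σ lam θ μ q : ℝ) (hσ : 0 < σ) (hlam : 0 < lam) (hθ : 0 < θ) (hq : 0 < q)
    (hμ : μ = q - σ^2/2 + lam/(θ+1))
    (ψ : ℝ → ℝ)
    (hψ : ∀ z : ℝ, z ≠ -θ → ψ z = σ^2/2 * z^2 + μ * z + lam * (θ/(θ+z) - 1))
    (β₁ β₂ β₃ : ℝ) (h12 : β₁ < β₂) (h23 : β₂ < β₃) (h3 : β₃ = 1)
    (hcubic : ∀ z : ℝ, z ≠ -θ →
      σ^2/2 * (z - β₁) * (z - β₂) * (z - 1) = (θ + z) * (ψ z - q))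
    (C₁ C₂ C₃ : ℝ)
    (hC₁ : C₁ = 2 * (θ + β₁) / (σ^2 * ((β₂ - β₁) * (β₃ - β₁))))
    (hC₂ : C₂ = 2 * (θ + β₂) / (σ^2 * ((β₁ - β₂) * (β₃ - β₂))))
    (hC₃ : C₃ = 2 * (θ + β₃) / (σ^2 * ((β₁ - β₃) * (β₂ - β₃))))
    (K : ℝ) (hK : 0 < K) (xstar : ℝ) (hxstar : xstar < Real.log K)
    (δ : ℝ) (hδ : 0 < δ)
    (w : ℝ → ℝ)
    (hw1 : ∀ x : ℝ, x ≤ xstar → w x = K - Real.exp x)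
    (hw2 : ∀ x : ℝ, xstar < x → x < Real.log K →
      w x = K * q * (C₁ / β₁ * Real.exp (β₁ * (x - xstar))
          + C₂ / β₂ * Real.exp (β₂ * (x - xstar))
          + C₃ / β₃ * Real.exp (β₃ * (x - xstar))) - Real.exp x)
    (hw3 : ∀ x : ℝ, Real.log K ≤ x → w x = δ)
    (hxeq : δ / K = q * (C₁ / β₁ * K ^ β₁ * Real.exp (-β₁ * xstar)
        + C₂ / β₂ * K ^ β₂ * Real.exp (-β₂ * xstar)
        + C₃ / β₃ * K ^ β₃ * Real.exp (-β₃ * xstar)) - 1) :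
    (∫ t in Set.Iio (0:ℝ), ∫ u in Set.Iio t,
        (w (t + Real.log K) - δ) * Real.exp (-(t - u)) * (lam * θ * Real.exp (θ * u)))
      = δ * q
    ↔ q * (C₁ * K ^ β₁ / (β₁ * (θ + β₁)) * Real.exp (-β₁ * xstar)
          + C₂ * K ^ β₂ / (β₂ * (θ + β₂)) * Real.exp (-β₂ * xstar)
          + C₃ * K ^ β₃ / (β₃ * (θ + β₃)) * Real.exp (-β₃ * xstar))
        - ((lam + (θ + 1) * q) / (lam * θ * K)) * δ = 1 / (θ + 1) :=
  stmt_16_general σ lam θ μ q hσ hlam hθ hq ψ hψ β₁ β₂ β₃ h12 h23 h3 hcubic C₁ C₂ C₃ hC₁ hC₂ hC₃ K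
    hK xstar hxstar δ w hw1 hw2
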